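/- arXiv:1806.00528 — 2 statements merged into one kernel-verified Lean document; each statement's English description precedes it below -/
import Mathlib

section
/- Given a finite Markov chain M with initial state, a positive integer k, and λ ∈ (0,1], for any Markov chain N' with at most k states there exists a Markov chain N with at most k states whose labels are all taken from L(M) such that d_λ(M,N) ≤ d_λ(M,N'). -/
/-!
Replace every label of `N'` that does not occur in `M` by the label of `M`'s initial state.
This only merges label classes, so label equality before relabelling implies label equality
after it. Hence every `[0,1]`-valued prefixed point `d` of the old operator `psi` is one of the
new operator too: where the labels were already equal nothing changes, and where they have just
become equal the old constraint forced `d = 1`, while `λ · K(d) ≤ 1` because `λ ≤ 1` and the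
Kantorovich lift of a `[0,1]`-valued `d` is at most `1`. The infimum over the larger set is
smaller.
-/

open Finset

def IsDist {X : Type*} [Fintype X] (μ : X → ℝ) : Prop :=
  (∀ x, 0 ≤ μ x) ∧ ∑ x, μ x = 1

def IsCoupling {X : Type*} [Fintype X] (μ ν : X → ℝ) (ω : X × X → ℝ) : Prop :=
  IsDist ω ∧ (∀ x, ∑ y, ω (x, y) = μ x) ∧ (∀ y, ∑ x, ω (x, y) = ν y)

noncomputable def kant {X : Type*} [Fintype X] (d : X → X → ℝ) (μ ν : X → ℝ) : ℝ :=
  sInf { c | ∃ ω : X × X → ℝ, IsCoupling μ ν ω ∧ c = ∑ p : X × X, d p.1 p.2 * ω p }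

open Classical in
noncomputable def psi {S L : Type*} [Fintype S] (lam : ℝ) (T : S → S → ℝ) (lab : S → L)
    (d : S → S → ℝ) : S → S → ℝ :=
  fun s t => if lab s = lab t then lam * kant d (T s) (T t) else 1

noncomputable def bdist {S L : Type*} [Fintype S] (lam : ℝ) (T : S → S → ℝ) (lab : S → L) :
    S → S → ℝ := fun s t =>
  sInf { r | ∃ d : S → S → ℝ, (∀ a b, 0 ≤ d a b ∧ d a b ≤ 1) ∧
      (∀ a b, psi lam T lab d a b ≤ d a b) ∧ r = d s t }

def sumT {M N : Type*} (τ : M → M → ℝ) (θ : N → N → ℝ) : M ⊕ N → M ⊕ N → ℝ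
  | Sum.inl m, Sum.inl m' => τ m m'
  | Sum.inr n, Sum.inr n' => θ n n'
  | _, _ => 0

def sumL {M N L : Type*} (ℓ : M → L) (α : N → L) : M ⊕ N → L
  | Sum.inl m => ℓ m
  | Sum.inr n => α n

section Kantorovich

variable {X : Type*} [Fintype X]

lemma sum_prod_mul_of_isDist {μ ν : X → ℝ} (hμ : IsDist μ) (hν : IsDist ν) :
    ∑ p : X × X, μ p.1 * ν p.2 = 1 := by
  rw [Fintype.sum_prod_type]
  simp only [← Finset.mul_sum, hν.2, mul_one]
  exact hμ.2

lemma isCoupling_prod {μ ν : X → ℝ} (hμ : IsDist μ) (hν : IsDist ν) :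
    IsCoupling μ ν (fun p => μ p.1 * ν p.2) := by
  refine ⟨⟨fun p => mul_nonneg (hμ.1 p.1) (hν.1 p.2), sum_prod_mul_of_isDist hμ hν⟩,
    fun x => ?_, fun y => ?_⟩
  · simp only [← Finset.mul_sum, hν.2, mul_one]
  · simp only [← Finset.sum_mul, hμ.2, one_mul]

lemma kant_le_one {d : X → X → ℝ} {μ ν : X → ℝ}
    (hd : ∀ a b, 0 ≤ d a b ∧ d a b ≤ 1) (hμ : IsDist μ) (hν : IsDist ν) :
    kant d μ ν ≤ 1 := by
  have hbdd : BddBelow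
      {c | ∃ ω : X × X → ℝ, IsCoupling μ ν ω ∧ c = ∑ p : X × X, d p.1 p.2 * ω p} := by
    refine ⟨0, ?_⟩
    rintro c ⟨ω, hω, rfl⟩
    exact Finset.sum_nonneg fun p _ => mul_nonneg (hd _ _).1 (hω.1.1 p)
  calc kant d μ ν ≤ ∑ p : X × X, d p.1 p.2 * (μ p.1 * ν p.2) :=
        csInf_le hbdd ⟨_, isCoupling_prod hμ hν, rfl⟩
    _ ≤ ∑ p : X × X, μ p.1 * ν p.2 :=
        Finset.sum_le_sum fun p _ =>
          mul_le_of_le_one_left (mul_nonneg (hμ.1 p.1) (hν.1 p.2)) (hd _ _).2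
    _ = 1 := sum_prod_mul_of_isDist hμ hν

end Kantorovich

section Bisimilarity

variable {S L : Type*} [Fintype S] {lam : ℝ} {T : S → S → ℝ} {d : S → S → ℝ}

lemma psi_le_one (hlam : 0 ≤ lam ∧ lam ≤ 1) (hT : ∀ s, IsDist (T s))
    (hd : ∀ a b, 0 ≤ d a b ∧ d a b ≤ 1) (lab : S → L) (s t : S) :
    psi lam T lab d s t ≤ 1 := by
  unfold psi
  split_ifs
  · exact (mul_le_of_le_one_right hlam.1 (kant_le_one hd (hT s) (hT t))).trans hlam.2
  · exact le_rfl

lemma psi_comp_le_of_psi_le {L' : Type*} (hlam : 0 ≤ lam ∧ lam ≤ 1) (hT : ∀ s, IsDist (T s))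
    (hd : ∀ a b, 0 ≤ d a b ∧ d a b ≤ 1) {lab : S → L} (f : L → L')
    (hfix : ∀ a b, psi lam T lab d a b ≤ d a b) (a b : S) :
    psi lam T (f ∘ lab) d a b ≤ d a b := by
  by_cases hold : lab a = lab b
  · have hnew : (f ∘ lab) a = (f ∘ lab) b := congrArg f hold
    simpa only [psi, if_pos hold, if_pos hnew] using hfix a b
  · have hone : 1 ≤ d a b := by simpa only [psi, if_neg hold] using hfix a b
    exact (psi_le_one hlam hT hd _ a b).trans hone

theorem bdist_comp_le {L' : Type*} (hlam : 0 ≤ lam ∧ lam ≤ 1) (hT : ∀ s, IsDist (T s))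
    (lab : S → L) (f : L → L') (s t : S) :
    bdist lam T (f ∘ lab) s t ≤ bdist lam T lab s t := by
  have hunit : ∀ a b : S, 0 ≤ (1 : ℝ) ∧ (1 : ℝ) ≤ 1 := fun _ _ => ⟨zero_le_one, le_rfl⟩
  refine csInf_le_csInf ?_ ?_ ?_
  · refine ⟨0, ?_⟩
    rintro r ⟨d, hd, -, rfl⟩
    exact (hd s t).1
  · exact ⟨1, fun _ _ => 1, hunit, psi_le_one hlam hT hunit lab, rfl⟩
  · rintro r ⟨d, hd, hfix, rfl⟩
    exact ⟨d, hd, psi_comp_le_of_psi_le hlam hT hd f hfix, rfl⟩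

end Bisimilarity

lemma isDist_sumT {M N : Type*} [Fintype M] [Fintype N]
    {τ : M → M → ℝ} {θ : N → N → ℝ} (hτ : ∀ m, IsDist (τ m)) (hθ : ∀ n, IsDist (θ n)) :
    ∀ s : M ⊕ N, IsDist (sumT τ θ s)
  | Sum.inl m => ⟨fun x => by cases x <;> simp [sumT, (hτ m).1],
      by simp [Fintype.sum_sum_type, sumT, (hτ m).2]⟩
  | Sum.inr n => ⟨fun x => by cases x <;> simp [sumT, (hθ n).1],
      by simp [Fintype.sum_sum_type, sumT, (hθ n).2]⟩

lemma sumL_comp {M N L : Type*} {ℓ : M → L} (α : N → L) {f : L → L}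
    (hf : ∀ m, f (ℓ m) = ℓ m) : sumL ℓ (f ∘ α) = f ∘ sumL ℓ α := by
  funext s
  cases s <;> simp [sumL, hf]

theorem stmt10_general {M L : Type*} [Fintype M] (k : ℕ)
    (lam : ℝ) (hlam : 0 < lam ∧ lam ≤ 1)
    (τ : M → M → ℝ) (hτ : ∀ m, IsDist (τ m)) (ℓ : M → L) (m0 : M)
    (θ' : Fin k → Fin k → ℝ) (hθ' : ∀ i, IsDist (θ' i)) (α' : Fin k → L) (n0 : Fin k) :
    ∃ (θ : Fin k → Fin k → ℝ) (α : Fin k → L),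
      (∀ i, IsDist (θ i)) ∧ (∀ i, α i ∈ Set.range ℓ) ∧
      bdist lam (sumT τ θ) (sumL ℓ α) (Sum.inl m0) (Sum.inr n0)
        ≤ bdist lam (sumT τ θ') (sumL ℓ α') (Sum.inl m0) (Sum.inr n0) := by
  classical
  set f : L → L := fun x => if x ∈ Set.range ℓ then x else ℓ m0
  have hf_range : ∀ x, f x ∈ Set.range ℓ := fun x => by
    by_cases hx : x ∈ Set.range ℓ
    · simpa only [f, if_pos hx]
    · simp only [f, if_neg hx, Set.mem_range_self]
  have hf_fix : ∀ m, f (ℓ m) = ℓ m := fun m => by simp [f]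
  refine ⟨θ', f ∘ α', hθ', fun i => hf_range (α' i), ?_⟩
  rw [sumL_comp α' hf_fix]
  exact bdist_comp_le ⟨hlam.1.le, hlam.2⟩ (isDist_sumT hτ hθ') _ f _ _

theorem stmt10 {M L : Type*} [Fintype M] [Nonempty M] (k : ℕ) (hk : 0 < k)
    (lam : ℝ) (hlam : 0 < lam ∧ lam ≤ 1)
    (τ : M → M → ℝ) (hτ : ∀ m, IsDist (τ m)) (ℓ : M → L) (m0 : M)
    (θ' : Fin k → Fin k → ℝ) (hθ' : ∀ i, IsDist (θ' i)) (α' : Fin k → L) (n0 : Fin k) :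
    ∃ (θ : Fin k → Fin k → ℝ) (α : Fin k → L),
      (∀ i, IsDist (θ i)) ∧ (∀ i, α i ∈ Set.range ℓ) ∧
      bdist lam (sumT τ θ) (sumL ℓ α) (Sum.inl m0) (Sum.inr n0)
        ≤ bdist lam (sumT τ θ') (sumL ℓ α') (Sum.inl m0) (Sum.inr n0) :=
  stmt10_general k lam hlam τ hτ ℓ m0 θ' hθ' α' n0
end

section
/- Two states m, n of a Markov chain M satisfy d_λ(m,n) = 0 if there exists a coupling structure C for M such that the pair (m,n) cannot reach, in the directed graph on M×M with edges given by the supports of C, any pair of states with different labels. -/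
open Finset

/-! The indicator of the pairs from which a differently-labelled pair is reachable in the support
graph of `C` is a prefixed point of `psi`: from a pair that cannot reach a mislabelled pair, the
coupling `C` only charges pairs with the same property, so it witnesses a Kantorovich distance of
zero. Since `bdist` is the infimum over prefixed points, it vanishes at `(m, n)`. -/

section Kantorovich

variable {X : Type*} [Fintype X] {d : X → X → ℝ} {μ ν : X → ℝ}

lemma sum_mul_coupling_nonneg (hd : ∀ x y, 0 ≤ d x y) {ω : X × X → ℝ}
    (hω : IsCoupling μ ν ω) : 0 ≤ ∑ p : X × X, d p.1 p.2 * ω p :=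
  sum_nonneg fun p _ => mul_nonneg (hd p.1 p.2) (hω.1.1 p)

lemma sum_mul_coupling_le_one (hd : ∀ x y, d x y ≤ 1) {ω : X × X → ℝ}
    (hω : IsCoupling μ ν ω) : ∑ p : X × X, d p.1 p.2 * ω p ≤ 1 :=
  calc ∑ p : X × X, d p.1 p.2 * ω p ≤ ∑ p : X × X, ω p :=
        sum_le_sum fun p _ => mul_le_of_le_one_left (hω.1.1 p) (hd p.1 p.2)
    _ = 1 := hω.1.2

lemma kant_nonneg (hd : ∀ x y, 0 ≤ d x y) : 0 ≤ kant d μ ν :=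
  Real.sInf_nonneg <| by
    rintro c ⟨ω, hω, rfl⟩
    exact sum_mul_coupling_nonneg hd hω

lemma kant_le_sum_mul_coupling (hd : ∀ x y, 0 ≤ d x y) {ω : X × X → ℝ}
    (hω : IsCoupling μ ν ω) : kant d μ ν ≤ ∑ p : X × X, d p.1 p.2 * ω p :=
  csInf_le ⟨0, by rintro c ⟨ω', hω', rfl⟩; exact sum_mul_coupling_nonneg hd hω'⟩ ⟨ω, hω, rfl⟩

end Kantorovich

section Bisimilarity

variable {S L : Type*} [Fintype S] {lam : ℝ} {T : S → S → ℝ} {lab : S → L}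

lemma bdist_nonneg (s t : S) : 0 ≤ bdist lam T lab s t :=
  Real.sInf_nonneg <| by
    rintro r ⟨d, hd, -, rfl⟩
    exact (hd s t).1

lemma bdist_le {d : S → S → ℝ} (hd : ∀ a b, 0 ≤ d a b ∧ d a b ≤ 1)
    (hpre : ∀ a b, psi lam T lab d a b ≤ d a b) (s t : S) : bdist lam T lab s t ≤ d s t :=
  csInf_le ⟨0, by rintro r ⟨d', hd', -, rfl⟩; exact (hd' s t).1⟩ ⟨d, hd, hpre, rfl⟩

end Bisimilarity

section CouplingStructure

variable {M L : Type*} (C : M → M → M × M → ℝ) (ℓ : M → L)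

def supportGraph : M × M → M × M → Prop := fun p q => 0 < C p.1 p.2 q

def CannotReachMislabelled (p : M × M) : Prop :=
  ∀ q, Relation.ReflTransGen (supportGraph C) p q → ℓ q.1 = ℓ q.2

open Classical in
noncomputable def mislabelledReach (a b : M) : ℝ :=
  if CannotReachMislabelled C ℓ (a, b) then 0 else 1

variable {C ℓ}

lemma CannotReachMislabelled.label_eq {p : M × M} (hp : CannotReachMislabelled C ℓ p) :
    ℓ p.1 = ℓ p.2 :=
  hp p .refl

lemma CannotReachMislabelled.of_supportGraph {p q : M × M}
    (hp : CannotReachMislabelled C ℓ p) (hpq : supportGraph C p q) :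
    CannotReachMislabelled C ℓ q :=
  fun r hqr => hp r (.head hpq hqr)

lemma mislabelledReach_mem_Icc (a b : M) :
    0 ≤ mislabelledReach C ℓ a b ∧ mislabelledReach C ℓ a b ≤ 1 := by
  unfold mislabelledReach
  split_ifs <;> norm_num

lemma sum_mislabelledReach_mul_eq_zero [Fintype M] {a b : M} (hC : ∀ p, 0 ≤ C a b p)
    (hab : CannotReachMislabelled C ℓ (a, b)) :
    ∑ p : M × M, mislabelledReach C ℓ p.1 p.2 * C a b p = 0 := by
  refine sum_eq_zero fun p _ => ?_
  rcases (hC p).eq_or_lt with hzero | hpos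
  · rw [← hzero, mul_zero]
  · rw [mislabelledReach, if_pos (hab.of_supportGraph hpos), zero_mul]

lemma psi_mislabelledReach_le [Fintype M] {lam : ℝ} (hlam : 0 ≤ lam ∧ lam ≤ 1) {τ : M → M → ℝ}
    (hC : ∀ a b, IsCoupling (τ a) (τ b) (C a b)) (a b : M) :
    psi lam τ ℓ (mislabelledReach C ℓ) a b ≤ mislabelledReach C ℓ a b := by
  have hnonneg a b := (mislabelledReach_mem_Icc (C := C) (ℓ := ℓ) a b).1
  have hkant := kant_le_sum_mul_coupling hnonneg (hC a b)
  by_cases hab : CannotReachMislabelled C ℓ (a, b)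
  · have hzero : kant (mislabelledReach C ℓ) (τ a) (τ b) ≤ 0 :=
      hkant.trans_eq (sum_mislabelledReach_mul_eq_zero (hC a b).1.1 hab)
    rw [mislabelledReach, if_pos hab, psi, if_pos hab.label_eq]
    exact mul_nonpos_of_nonneg_of_nonpos hlam.1 hzero
  · have hone : kant (mislabelledReach C ℓ) (τ a) (τ b) ≤ 1 :=
      hkant.trans (sum_mul_coupling_le_one (fun a b => (mislabelledReach_mem_Icc a b).2) (hC a b))
    rw [mislabelledReach, if_neg hab, psi]
    split_ifs
    · exact mul_le_one₀ hlam.2 (kant_nonneg hnonneg) hone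
    · exact le_rfl

end CouplingStructure

theorem stmt15_general {M L : Type*} [Fintype M]
    (lam : ℝ) (hlam : 0 < lam ∧ lam ≤ 1)
    (τ : M → M → ℝ) (ℓ : M → L)
    (m n : M)
    (h : ∃ C : M → M → (M × M → ℝ),
      (∀ a b, IsCoupling (τ a) (τ b) (C a b)) ∧
      ∀ p : M × M,
        Relation.ReflTransGen (fun p q : M × M => 0 < C p.1 p.2 q) (m, n) p →
        ℓ p.1 = ℓ p.2) :
    bdist lam τ ℓ m n = 0 := by
  obtain ⟨C, hC, hmn⟩ := h
  have hzero : mislabelledReach C ℓ m n = 0 := if_pos hmn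
  refine le_antisymm ?_ (bdist_nonneg m n)
  calc bdist lam τ ℓ m n ≤ mislabelledReach C ℓ m n :=
        bdist_le mislabelledReach_mem_Icc (psi_mislabelledReach_le ⟨hlam.1.le, hlam.2⟩ hC) m n
    _ = 0 := hzero

theorem stmt15 {M L : Type*} [Fintype M] [Nonempty M]
    (lam : ℝ) (hlam : 0 < lam ∧ lam ≤ 1)
    (τ : M → M → ℝ) (hτ : ∀ m, IsDist (τ m)) (ℓ : M → L)
    (m n : M)
    (h : ∃ C : M → M → (M × M → ℝ),
      (∀ a b, IsCoupling (τ a) (τ b) (C a b)) ∧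
      ∀ p : M × M,
        Relation.ReflTransGen (fun p q : M × M => 0 < C p.1 p.2 q) (m, n) p →
        ℓ p.1 = ℓ p.2) :
    bdist lam τ ℓ m n = 0 :=
  stmt15_general lam hlam τ ℓ m n h
end
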